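/- arXiv:1509.00388 — 2 statements merged into one kernel-verified Lean document; each statement's English description precedes it below -/
import Mathlib

section
/- Let p₁, p₂, p₃ and q₁, q₂, q₃ be six pairwise distinct points in ℝ² with no three of the six points collinear. Then the number of points at which an open edge segment of the triangle p₁p₂p₃ meets an open edge segment of the triangle q₁q₂q₃ is even. -/
/-- The open straight-line segment representing an edge (an unordered pair of
vertices) in a straight-line drawing `ρ`. -/
def edgeSeg {V : Type*} (ρ : V → ℝ × ℝ) : Sym2 V → Set (ℝ × ℝ) :=
  Sym2.lift ⟨fun u v => openSegment ℝ (ρ u) (ρ v),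
    fun u v => openSegment_symm ℝ (ρ u) (ρ v)⟩

/-- Two edges *cross* in the drawing `ρ`: they share no endpoint and
their open segments meet. -/
def Crosses {V : Type*} (ρ : V → ℝ × ℝ) (e f : Sym2 V) : Prop :=
  (∀ v : V, v ∈ e → v ∉ f) ∧ (edgeSeg ρ e ∩ edgeSeg ρ f).Nonempty

/-- `ρ` is a straight-line drawing of the simple graph `G`. -/
structure IsStraightLineDrawing {V : Type*} (G : SimpleGraph V) (ρ : V → ℝ × ℝ) : Prop where
  inj : Function.Injective ρ
  no_vertex_on_edge : ∀ e ∈ G.edgeSet, ∀ v : V, v ∉ e → ρ v ∉ edgeSeg ρ e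
  meet_at_most_once : ∀ e ∈ G.edgeSet, ∀ f ∈ G.edgeSet, (∀ v : V, v ∈ e → v ∉ f) →
    (edgeSeg ρ e ∩ edgeSeg ρ f).Subsingleton

/-- `ρ` is an IC-planar straight-line drawing of `G`: it is a straight-line drawing,
each edge crosses at most one other edge, and the crossed edges form a matching. -/
def IsICPlanarDrawing {V : Type*} (G : SimpleGraph V) (ρ : V → ℝ × ℝ) : Prop :=
  IsStraightLineDrawing G ρ ∧
  (∀ e ∈ G.edgeSet, ∀ f ∈ G.edgeSet, ∀ g ∈ G.edgeSet,
    Crosses ρ e f → Crosses ρ e g → f = g) ∧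
  (∀ e ∈ G.edgeSet, ∀ f ∈ G.edgeSet,
    (∃ e' ∈ G.edgeSet, Crosses ρ e e') → (∃ f' ∈ G.edgeSet, Crosses ρ f f') →
    e ≠ f → ∀ v : V, v ∈ e → v ∉ f)

/-- All vertices are placed at integer coordinates. -/
def IsGridDrawing {V : Type*} (ρ : V → ℝ × ℝ) : Prop :=
  ∀ v : V, ∃ a b : ℤ, ρ v = ((a : ℝ), (b : ℝ))

/-- `ρ` is a RAC drawing of `G`: any two crossing edges are perpendicular. -/
def IsRACDrawing {V : Type*} (G : SimpleGraph V) (ρ : V → ℝ × ℝ) : Prop :=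
  ∀ e ∈ G.edgeSet, ∀ f ∈ G.edgeSet, Crosses ρ e f →
    ∀ a b c d : V, e = s(a, b) → f = s(c, d) →
      ((ρ b).1 - (ρ a).1) * ((ρ d).1 - (ρ c).1)
        + ((ρ b).2 - (ρ a).2) * ((ρ d).2 - (ρ c).2) = 0

/-!
Walk along an edge `xy` of the second triangle. In general position the walk enters or leaves
the open first triangle exactly where it crosses one of its open edges, so the number of such
crossings is even iff `x` and `y` are both inside or both outside; summing over the three edges
`q₁q₂`, `q₂q₃`, `q₃q₁` counts every vertex twice, so the total is even.

Parametrising the segment, the edge lines of the first triangle become affine functions of the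
parameter, positive exactly on the side of the interior. The parity claim then holds for any list
of affine functions without common zeros, by induction: a new function that changes sign at `r`
cuts the range down to one side of `r`, and adds the crossing `r` iff `r` lies inside the others.
-/

open Set

namespace AffineMap

theorem apply_eq_add_mul_sub (f : ℝ →ᵃ[ℝ] ℝ) (t : ℝ) : f t = f 0 + t * (f 1 - f 0) := by
  have := f.apply_lineMap 0 1 t
  rw [lineMap_apply_ring', lineMap_apply_ring'] at this
  simpa [add_comm] using this

theorem pos_of_mem_Icc {f : ℝ →ᵃ[ℝ] ℝ} {u v t : ℝ} (ht : t ∈ Icc u v) (hu : 0 < f u)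
    (hv : 0 < f v) : 0 < f t := by
  have hf := f.apply_eq_add_mul_sub
  have := hf u; have := hf v; have := hf t
  obtain ⟨h₁, h₂⟩ := ht
  rcases le_total 0 (f 1 - f 0) with hm | hm <;> nlinarith

theorem neg_of_mem_Icc {f : ℝ →ᵃ[ℝ] ℝ} {u v t : ℝ} (ht : t ∈ Icc u v) (hu : f u < 0)
    (hv : f v < 0) : f t < 0 := by
  simpa using pos_of_mem_Icc (f := -f) ht (by simpa using hu) (by simpa using hv)

theorem exists_zero_of_neg_of_pos {f : ℝ →ᵃ[ℝ] ℝ} {u v : ℝ} (huv : u < v) (hu : f u < 0)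
    (hv : 0 < f v) : ∃ r ∈ Ioo u v, (∀ t, f t = 0 ↔ t = r) ∧ ∀ t, 0 < f t ↔ r < t := by
  have hf := f.apply_eq_add_mul_sub
  set m := f 1 - f 0
  have hm : 0 < m := by
    have := hf u; have := hf v; nlinarith
  have key : ∀ t, f t = m * (t - -f 0 / m) := fun t => by rw [hf]; field_simp; ring
  refine ⟨-f 0 / m, ⟨?_, ?_⟩, fun t => ?_, fun t => ?_⟩
  · have := key u; nlinarith
  · have := key v; nlinarith
  · rw [key, mul_eq_zero, or_iff_right hm.ne', sub_eq_zero]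
  · rw [key, mul_pos_iff_of_pos_left hm, sub_pos]

theorem exists_zero_of_pos_of_neg {f : ℝ →ᵃ[ℝ] ℝ} {u v : ℝ} (huv : u < v) (hu : 0 < f u)
    (hv : f v < 0) : ∃ r ∈ Ioo u v, (∀ t, f t = 0 ↔ t = r) ∧ ∀ t, 0 < f t ↔ t < r := by
  obtain ⟨r, hr, hzero, hneg⟩ :=
    exists_zero_of_neg_of_pos (f := -f) huv (by simpa using hu) (by simpa using hv)
  refine ⟨r, hr, fun t => by simpa using hzero t, fun t => ?_⟩
  have h₀ := hzero t
  have h₁ := hneg t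
  simp only [coe_neg, Pi.neg_apply, neg_eq_zero, neg_pos] at h₀ h₁
  rw [← not_le, le_iff_lt_or_eq, h₁, h₀, not_or, not_lt]
  exact lt_iff_le_and_ne.symm

end AffineMap

def crossingSet (L : List (ℝ →ᵃ[ℝ] ℝ)) (S : Set ℝ) : Set ℝ :=
  {t ∈ S | (∀ f ∈ L, 0 ≤ f t) ∧ ¬∀ f ∈ L, 0 < f t}

section crossingSet

variable {g : ℝ →ᵃ[ℝ] ℝ} {L : List (ℝ →ᵃ[ℝ] ℝ)} {S : Set ℝ}

@[simp] theorem crossingSet_nil : crossingSet [] S = ∅ := by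
  simp [crossingSet]

theorem crossingSet_cons_of_pos (hg : ∀ t ∈ S, 0 < g t) :
    crossingSet (g :: L) S = crossingSet L S := by
  ext t
  simp only [crossingSet, List.forall_mem_cons, mem_ofPred_eq]
  exact and_congr_right fun ht => by simp [hg t ht, (hg t ht).le]

theorem crossingSet_cons_of_neg (hg : ∀ t ∈ S, g t < 0) : crossingSet (g :: L) S = ∅ := by
  ext t
  simp only [crossingSet, List.forall_mem_cons, mem_ofPred_eq, mem_empty_iff_false, iff_false]
  exact fun ⟨ht, ⟨hgt, _⟩, _⟩ => (hg t ht).not_ge hgt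

theorem crossingSet_cons_of_zero {r : ℝ} (hr : r ∈ S) (hLr : ∀ f ∈ L, f r ≠ 0)
    (hzero : ∀ t, g t = 0 ↔ t = r) :
    crossingSet (g :: L) S =
      crossingSet L (S ∩ {t | 0 < g t}) ∪ {t | t = r ∧ ∀ f ∈ L, 0 < f t} := by
  ext t
  simp only [crossingSet, List.forall_mem_cons, mem_ofPred_eq, mem_inter_iff, mem_union]
  rcases lt_trichotomy (g t) 0 with h | h | h
  · simp [h.not_ge, h.not_gt, (hzero t).not.1 h.ne]
  · obtain rfl := (hzero t).1 h
    simp only [h, hr, le_refl, lt_irrefl, true_and, false_and, not_false_eq_true, and_true,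
      and_false, false_or]
    exact ⟨fun hL f hf => (hL f hf).lt_of_ne' (hLr f hf), fun hL f hf => (hL f hf).le⟩
  · simp [h, h.le, (hzero t).not.1 h.ne']

theorem crossingSet_cons_parity_of_zero {r : ℝ} (hr : r ∈ S) (hLr : ∀ f ∈ L, f r ≠ 0)
    (hzero : ∀ t, g t = 0 ↔ t = r) (hfin : (crossingSet L (S ∩ {t | 0 < g t})).Finite) :
    (crossingSet (g :: L) S).Finite ∧
      (Even (crossingSet (g :: L) S).ncard ↔
        (Even (crossingSet L (S ∩ {t | 0 < g t})).ncard ↔ ¬∀ f ∈ L, 0 < f r)) := by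
  have hnot : r ∉ crossingSet L (S ∩ {t | 0 < g t}) := fun h => by
    simpa [(hzero r).2 rfl] using h.1.2
  rw [crossingSet_cons_of_zero hr hLr hzero]
  by_cases hin : ∀ f ∈ L, 0 < f r
  · have : {t | t = r ∧ ∀ f ∈ L, 0 < f t} = {r} := by ext t; simp +contextual [hin]
    rw [this, union_singleton, ncard_insert_of_notMem hnot hfin, Nat.even_add_one]
    exact ⟨hfin.insert r, by rw [iff_false_intro (not_not_intro hin), iff_false]⟩
  · have : {t | t = r ∧ ∀ f ∈ L, 0 < f t} = ∅ := by ext t; simp +contextual [hin]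
    rw [this, union_empty]
    exact ⟨hfin, by rw [iff_true_intro hin, iff_true]⟩

theorem crossingSet_parity {u v : ℝ} (huv : u < v) (hu : ∀ f ∈ L, f u ≠ 0)
    (hv : ∀ f ∈ L, f v ≠ 0) (hL : L.Pairwise fun f g => ∀ t, f t = 0 → g t ≠ 0) :
    (crossingSet L (Ioo u v)).Finite ∧
      (Even (crossingSet L (Ioo u v)).ncard ↔ ((∀ f ∈ L, 0 < f u) ↔ ∀ f ∈ L, 0 < f v)) := by
  induction L generalizing u v with
  | nil => simp
  | cons g L ih =>
    simp only [List.forall_mem_cons] at hu hv ⊢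
    obtain ⟨hgL, hL⟩ := List.pairwise_cons.1 hL
    have hL_ne {r : ℝ} (hr : g r = 0) : ∀ f ∈ L, f r ≠ 0 := fun f hf => hgL f hf r hr
    rcases hu.1.lt_or_gt with hgu | hgu <;> rcases hv.1.lt_or_gt with hgv | hgv
    · rw [crossingSet_cons_of_neg fun t ht => g.neg_of_mem_Icc (Ioo_subset_Icc_self ht) hgu hgv]
      simp [hgu.not_gt, hgv.not_gt]
    · obtain ⟨r, hr, hzero, hpos⟩ := g.exists_zero_of_neg_of_pos huv hgu hgv
      have hJ : Ioo u v ∩ {t | 0 < g t} = Ioo r v := by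
        ext t
        simp only [mem_inter_iff, mem_Ioo, mem_ofPred_eq, hpos]
        exact ⟨fun ⟨⟨_, h⟩, h'⟩ => ⟨h', h⟩, fun ⟨h', h⟩ => ⟨⟨hr.1.trans h', h⟩, h'⟩⟩
      have hLr := hL_ne ((hzero r).2 rfl)
      obtain ⟨hfin, hpar⟩ := ih hr.2 hLr hv.2 hL
      rw [← hJ] at hfin hpar
      obtain ⟨hfin', hpar'⟩ := crossingSet_cons_parity_of_zero hr hLr hzero hfin
      refine ⟨hfin', ?_⟩
      rw [hpar', hpar]
      simp only [hgu.not_gt, hgv, false_and, true_and]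
      tauto
    · obtain ⟨r, hr, hzero, hpos⟩ := g.exists_zero_of_pos_of_neg huv hgu hgv
      have hJ : Ioo u v ∩ {t | 0 < g t} = Ioo u r := by
        ext t
        simp only [mem_inter_iff, mem_Ioo, mem_ofPred_eq, hpos]
        exact ⟨fun ⟨⟨h, _⟩, h'⟩ => ⟨h, h'⟩, fun ⟨h, h'⟩ => ⟨⟨h, h'.trans hr.2⟩, h'⟩⟩
      have hLr := hL_ne ((hzero r).2 rfl)
      obtain ⟨hfin, hpar⟩ := ih hr.1 hu.2 hLr hL
      rw [← hJ] at hfin hpar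
      obtain ⟨hfin', hpar'⟩ := crossingSet_cons_parity_of_zero hr hLr hzero hfin
      refine ⟨hfin', ?_⟩
      rw [hpar', hpar]
      simp only [hgu, hgv.not_gt, false_and, true_and]
      tauto
    · rw [crossingSet_cons_of_pos fun t ht => g.pos_of_mem_Icc (Ioo_subset_Icc_self ht) hgu hgv]
      simpa [hgu, hgv] using ih huv hu.2 hv.2 hL

end crossingSet

/-- Twice the signed area of the triangle `abc`. -/
def orient (a b c : ℝ × ℝ) : ℝ := (b.1 - a.1) * (c.2 - a.2) - (b.2 - a.2) * (c.1 - a.1)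

section orient

variable {a b c z : ℝ × ℝ}

theorem orient_rotate (a b c : ℝ × ℝ) : orient b c a = orient a b c := by
  unfold orient; ring

@[simp] theorem orient_self_left (a c : ℝ × ℝ) : orient a a c = 0 := by
  simp [orient]

@[simp] theorem orient_self_right (a b : ℝ × ℝ) : orient a b b = 0 := by
  unfold orient; ring

@[simp] theorem orient_self_mid (a b : ℝ × ℝ) : orient a b a = 0 := by
  simp [orient]

theorem orient_lineMap (a b x y : ℝ × ℝ) (t : ℝ) :
    orient a b (AffineMap.lineMap x y t) = AffineMap.lineMap (orient a b x) (orient a b y) t := by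
  simp only [orient, AffineMap.lineMap_apply_module, Prod.fst_add, Prod.snd_add, Prod.smul_fst,
    Prod.smul_snd, smul_eq_mul]
  ring

theorem orient_add_orient_add_orient (a b c z : ℝ × ℝ) :
    orient b c z + orient c a z + orient a b z = orient a b c := by
  unfold orient; ring

/-- Cramer's rule: the barycentric coordinates of `z` in the triangle `abc`, scaled by
`orient a b c`. -/
theorem orient_smul_add_orient_smul_add_orient_smul (a b c z : ℝ × ℝ) :
    orient b c z • a + orient c a z • b + orient a b z • c = orient a b c • z := by
  ext <;> simp only [orient, Prod.fst_add, Prod.snd_add, Prod.smul_fst, Prod.smul_snd,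
    smul_eq_mul] <;> ring

theorem collinear_of_orient_eq_zero (h : orient a b c = 0) : Collinear ℝ {a, b, c} := by
  by_cases hab : a = b
  · subst hab
    simpa using collinear_pair ℝ a c
  have hn : 0 < (b.1 - a.1) ^ 2 + (b.2 - a.2) ^ 2 := by
    by_contra hle
    exact hab (Prod.ext (by nlinarith) (by nlinarith))
  rw [show ({a, b, c} : Set (ℝ × ℝ)) = {c, a, b} by ext; simp; tauto]
  apply collinear_insert_of_mem_affineSpan_pair
  -- the projection of `c - a` on `b - a` is `c - a` itself, the two being parallel
  have hc : c = AffineMap.lineMap a b (((b.1 - a.1) * (c.1 - a.1) + (b.2 - a.2) * (c.2 - a.2)) /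
      ((b.1 - a.1) ^ 2 + (b.2 - a.2) ^ 2)) := by
    unfold orient at h
    ext <;> simp only [AffineMap.lineMap_apply_module, Prod.fst_add, Prod.snd_add, Prod.smul_fst,
      Prod.smul_snd, smul_eq_mul] <;> field_simp
    · linear_combination -(b.2 - a.2) * h
    · linear_combination (b.1 - a.1) * h
  rw [hc]
  exact AffineMap.lineMap_mem_affineSpan_pair _ _ _

theorem mem_openSegment_iff_orient (ho : orient a b c ≠ 0) :
    z ∈ openSegment ℝ a b ↔
      orient a b z = 0 ∧ 0 < orient a b c * orient b c z ∧ 0 < orient a b c * orient c a z := by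
  have hbca := orient_rotate a b c
  have hcab := orient_rotate c a b
  rw [openSegment_eq_image_lineMap]
  constructor
  · rintro ⟨t, ⟨ht₀, ht₁⟩, rfl⟩
    simp only [orient_lineMap, AffineMap.lineMap_apply_ring, orient_self_right, orient_self_mid,
      hbca, ← hcab]
    refine ⟨by ring, ?_, ?_⟩ <;> nlinarith [mul_self_pos.2 ho]
  · rintro ⟨hA, hB, hC⟩
    have hsum := orient_add_orient_add_orient a b c z
    have hbar := orient_smul_add_orient_smul_add_orient_smul a b c z
    rw [hA, add_zero] at hsum
    rw [hA, zero_smul, add_zero] at hbar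
    have hpos {w : ℝ} (h : 0 < orient a b c * w) : 0 < w / orient a b c :=
      div_pos_iff.2 ((mul_pos_iff.1 h).imp And.symm And.symm)
    have hcompl : 1 - orient c a z / orient a b c = orient b c z / orient a b c := by
      field_simp; linarith
    refine ⟨orient c a z / orient a b c, ⟨hpos hC, by linarith [hpos hB]⟩, ?_⟩
    rw [AffineMap.lineMap_apply_module, hcompl]
    apply smul_right_injective _ ho
    dsimp only
    rw [← hbar, smul_add, smul_smul, smul_smul, mul_div_cancel₀ _ ho, mul_div_cancel₀ _ ho]

theorem eq_of_orient_eq_zero_of_orient_eq_zero (ho : orient a b c ≠ 0) (h₁ : orient a b z = 0)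
    (h₂ : orient b c z = 0) : z = b := by
  have hsum := orient_add_orient_add_orient a b c z
  have hbar := orient_smul_add_orient_smul_add_orient_smul a b c z
  rw [h₁, h₂, zero_add, add_zero] at hsum
  rw [h₁, h₂, hsum, zero_smul, zero_smul, zero_add, add_zero] at hbar
  exact (smul_right_injective _ ho hbar).symm

theorem disjoint_openSegment_openSegment (ho : orient a b c ≠ 0) :
    Disjoint (openSegment ℝ a b) (openSegment ℝ b c) := by
  rw [disjoint_left]
  intro z hab hbc
  have h₁ := ((mem_openSegment_iff_orient ho).1 hab).2.1
  rw [((mem_openSegment_iff_orient ((orient_rotate a b c).symm ▸ ho)).1 hbc).1, mul_zero] at h₁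
  exact lt_irrefl 0 h₁

end orient

def orientAlong (x y p q : ℝ × ℝ) : ℝ →ᵃ[ℝ] ℝ :=
  AffineMap.lineMap (orient p q x) (orient p q y)

section orientAlong

variable {x y p q r : ℝ × ℝ}

theorem orientAlong_apply (x y p q : ℝ × ℝ) (t : ℝ) :
    orientAlong x y p q t = orient p q (AffineMap.lineMap x y t) :=
  (orient_lineMap p q x y t).symm

theorem lineMap_ne_of_orient_ne_zero (hq : orient x y q ≠ 0) (t : ℝ) :
    AffineMap.lineMap x y t ≠ q := by
  rintro rfl
  simp [orient_lineMap] at hq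

theorem orientAlong_ne_zero_of_eq_zero (hpqr : orient p q r ≠ 0) (hq : orient x y q ≠ 0)
    {t : ℝ} (h : orientAlong x y p q t = 0) : orientAlong x y q r t ≠ 0 := fun h' => by
  rw [orientAlong_apply] at h h'
  exact lineMap_ne_of_orient_ne_zero hq t (eq_of_orient_eq_zero_of_orient_eq_zero hpqr h h')

end orientAlong

def triangleOpenEdges (a b c : ℝ × ℝ) : Set (ℝ × ℝ) :=
  openSegment ℝ a b ∪ openSegment ℝ b c ∪ openSegment ℝ c a

def triangleInterior (a b c : ℝ × ℝ) : Set (ℝ × ℝ) :=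
  {z | 0 < orient a b c * orient a b z ∧ 0 < orient a b c * orient b c z ∧
    0 < orient a b c * orient c a z}

theorem mem_triangleOpenEdges_iff {a b c z : ℝ × ℝ} (ho : orient a b c ≠ 0) (ha : z ≠ a)
    (hb : z ≠ b) (hc : z ≠ c) :
    z ∈ triangleOpenEdges a b c ↔
      (0 ≤ orient a b c * orient a b z ∧ 0 ≤ orient a b c * orient b c z ∧
        0 ≤ orient a b c * orient c a z) ∧ z ∉ triangleInterior a b c := by
  have hbca := orient_rotate a b c
  have hcab := orient_rotate c a b
  have nab : ¬(orient a b z = 0 ∧ orient b c z = 0) := fun h =>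
    hb (eq_of_orient_eq_zero_of_orient_eq_zero ho h.1 h.2)
  have nbc : ¬(orient b c z = 0 ∧ orient c a z = 0) := fun h =>
    hc (eq_of_orient_eq_zero_of_orient_eq_zero (hbca ▸ ho) h.1 h.2)
  have nca : ¬(orient c a z = 0 ∧ orient a b z = 0) := fun h =>
    ha (eq_of_orient_eq_zero_of_orient_eq_zero (hcab ▸ ho) h.1 h.2)
  simp only [triangleOpenEdges, triangleInterior, mem_union, mem_ofPred_eq,
    mem_openSegment_iff_orient ho, mem_openSegment_iff_orient (hbca ▸ ho),
    mem_openSegment_iff_orient (hcab ▸ ho), hbca, ← hcab]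
  simp only [← mul_eq_zero_iff_left (b := orient a b z) ho,
    ← mul_eq_zero_iff_left (b := orient b c z) ho,
    ← mul_eq_zero_iff_left (b := orient c a z) ho] at nab nbc nca ⊢
  grind

theorem openSegment_inter_triangleOpenEdges_parity {a b c x y : ℝ × ℝ} (habc : orient a b c ≠ 0)
    (hx : orient a b x ≠ 0 ∧ orient b c x ≠ 0 ∧ orient c a x ≠ 0)
    (hy : orient a b y ≠ 0 ∧ orient b c y ≠ 0 ∧ orient c a y ≠ 0)
    (hxy : orient x y a ≠ 0 ∧ orient x y b ≠ 0 ∧ orient x y c ≠ 0) :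
    (openSegment ℝ x y ∩ triangleOpenEdges a b c).Finite ∧
      (Even (openSegment ℝ x y ∩ triangleOpenEdges a b c).ncard ↔
        (x ∈ triangleInterior a b c ↔ y ∈ triangleInterior a b c)) := by
  set o := orient a b c
  set L := [o • orientAlong x y a b, o • orientAlong x y b c, o • orientAlong x y c a]
  have hset : openSegment ℝ x y ∩ triangleOpenEdges a b c =
      AffineMap.lineMap x y '' crossingSet L (Ioo 0 1) := by
    rw [openSegment_eq_image_lineMap, ← image_inter_preimage]
    congr 1
    ext t
    rw [mem_inter_iff, mem_preimage, mem_triangleOpenEdges_iff habc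
      (lineMap_ne_of_orient_ne_zero hxy.1 t) (lineMap_ne_of_orient_ne_zero hxy.2.1 t)
      (lineMap_ne_of_orient_ne_zero hxy.2.2 t)]
    simp [crossingSet, L, orientAlong_apply, triangleInterior, o]
  have hL : L.Pairwise fun f g => ∀ t, f t = 0 → g t ≠ 0 := by
    simp only [L, List.pairwise_cons, List.forall_mem_cons, List.not_mem_nil, List.Pairwise.nil,
      IsEmpty.forall_iff, implies_true, and_true, AffineMap.coe_smul, Pi.smul_apply, smul_eq_mul,
      mul_eq_zero_iff_left habc, ne_eq]
    exact ⟨⟨fun t => orientAlong_ne_zero_of_eq_zero habc hxy.2.1,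
      fun t h h' => orientAlong_ne_zero_of_eq_zero (orient_rotate c a b ▸ habc) hxy.1 h' h⟩,
      fun t => orientAlong_ne_zero_of_eq_zero ((orient_rotate a b c).symm ▸ habc) hxy.2.2⟩
  have hne : x ≠ y := fun h => hxy.1 (h ▸ orient_self_left x a)
  obtain ⟨hfin, hpar⟩ := crossingSet_parity zero_lt_one
    (by simp [L, orientAlong, habc, hx]) (by simp [L, orientAlong, habc, hy]) hL
  rw [hset, ncard_image_of_injective _ (AffineMap.lineMap_injective ℝ hne), hpar]
  exact ⟨hfin.image _, by simp [L, orientAlong, triangleInterior, o]⟩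

def NoThreeCollinear (S : Set (ℝ × ℝ)) : Prop :=
  ∀ x ∈ S, ∀ y ∈ S, ∀ z ∈ S, x ≠ y → x ≠ z → y ≠ z → ¬Collinear ℝ ({x, y, z} : Set (ℝ × ℝ))

namespace NoThreeCollinear

theorem mono {S T : Set (ℝ × ℝ)} (hST : S ⊆ T) (hT : NoThreeCollinear T) : NoThreeCollinear S :=
  fun x hx y hy z hz => hT x (hST hx) y (hST hy) z (hST hz)

theorem orient_ne_zero {S : Set (ℝ × ℝ)} (hS : NoThreeCollinear S) {x y z : ℝ × ℝ} (hx : x ∈ S)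
    (hy : y ∈ S) (hz : z ∈ S) (hd : [x, y, z].Nodup) : orient x y z ≠ 0 := by
  simp only [List.nodup_cons, List.mem_cons, List.not_mem_nil, or_false, not_or] at hd
  exact fun h => hS x hx y hy z hz hd.1.1 hd.1.2 hd.2.1 (collinear_of_orient_eq_zero h)

theorem openSegment_inter_triangleOpenEdges_parity {a b c x y : ℝ × ℝ}
    (hS : NoThreeCollinear {a, b, c, x, y}) (hd : [a, b, c, x, y].Nodup) :
    (openSegment ℝ x y ∩ triangleOpenEdges a b c).Finite ∧
      (Even (openSegment ℝ x y ∩ triangleOpenEdges a b c).ncard ↔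
        (x ∈ triangleInterior a b c ↔ y ∈ triangleInterior a b c)) := by
  simp only [List.nodup_cons, List.mem_cons, List.not_mem_nil, or_false, not_or,
    List.nodup_nil, and_true] at hd
  refine _root_.openSegment_inter_triangleOpenEdges_parity ?_ ⟨?_, ?_, ?_⟩ ⟨?_, ?_, ?_⟩
    ⟨?_, ?_, ?_⟩ <;>
    exact hS.orient_ne_zero (by simp) (by simp) (by simp) (by
      simp only [List.nodup_cons, List.mem_cons, List.not_mem_nil, or_false, not_or,
        List.nodup_nil, and_true]
      tauto)

end NoThreeCollinear

theorem finite_and_ncard_triangleOpenEdges_inter {a b c : ℝ × ℝ} {E : Set (ℝ × ℝ)}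
    (ho : orient a b c ≠ 0) (hab : (openSegment ℝ a b ∩ E).Finite)
    (hbc : (openSegment ℝ b c ∩ E).Finite) (hca : (openSegment ℝ c a ∩ E).Finite) :
    (triangleOpenEdges a b c ∩ E).Finite ∧ (triangleOpenEdges a b c ∩ E).ncard =
      (openSegment ℝ a b ∩ E).ncard + (openSegment ℝ b c ∩ E).ncard +
        (openSegment ℝ c a ∩ E).ncard := by
  have hdab := disjoint_openSegment_openSegment ho
  have hdbc := disjoint_openSegment_openSegment ((orient_rotate a b c).symm ▸ ho)
  have hdca := disjoint_openSegment_openSegment (orient_rotate c a b ▸ ho)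
  rw [triangleOpenEdges, union_inter_distrib_right, union_inter_distrib_right]
  refine ⟨(hab.union hbc).union hca, ?_⟩
  rw [ncard_union_eq _ (hab.union hbc) hca, ncard_union_eq _ hab hbc]
  · exact hdab.mono inter_subset_left inter_subset_left
  · exact disjoint_union_left.2 ⟨hdca.symm.mono inter_subset_left inter_subset_left,
      hdbc.mono inter_subset_left inter_subset_left⟩

/-- Two triangles in general position (six pairwise distinct points,
no three collinear) have an even number of points where an open edge segment of one
meets an open edge segment of the other. -/
theorem two_triangles_cross_evenly (p₁ p₂ p₃ q₁ q₂ q₃ : ℝ × ℝ)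
    (hdist : List.Pairwise (· ≠ ·) [p₁, p₂, p₃, q₁, q₂, q₃])
    (hcol : ∀ x ∈ ({p₁, p₂, p₃, q₁, q₂, q₃} : Set (ℝ × ℝ)),
      ∀ y ∈ ({p₁, p₂, p₃, q₁, q₂, q₃} : Set (ℝ × ℝ)),
      ∀ z ∈ ({p₁, p₂, p₃, q₁, q₂, q₃} : Set (ℝ × ℝ)),
      x ≠ y → x ≠ z → y ≠ z → ¬ Collinear ℝ ({x, y, z} : Set (ℝ × ℝ))) :
    ((openSegment ℝ p₁ p₂ ∪ openSegment ℝ p₂ p₃ ∪ openSegment ℝ p₃ p₁) ∩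
      (openSegment ℝ q₁ q₂ ∪ openSegment ℝ q₂ q₃ ∪ openSegment ℝ q₃ q₁)).Finite ∧
    Even (((openSegment ℝ p₁ p₂ ∪ openSegment ℝ p₂ p₃ ∪ openSegment ℝ p₃ p₁) ∩
      (openSegment ℝ q₁ q₂ ∪ openSegment ℝ q₂ q₃ ∪ openSegment ℝ q₃ q₁)).ncard) := by
  have hS : NoThreeCollinear {p₁, p₂, p₃, q₁, q₂, q₃} := hcol
  have hd : [p₁, p₂, p₃, q₁, q₂, q₃].Nodup := hdist
  have hq : orient q₁ q₂ q₃ ≠ 0 := hS.orient_ne_zero (by simp) (by simp) (by simp)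
    (hd.sublist (List.sublist_append_right [p₁, p₂, p₃] _))
  have parity (x y : ℝ × ℝ) (hsub : {p₁, p₂, p₃, x, y} ⊆ ({p₁, p₂, p₃, q₁, q₂, q₃} : Set _))
      (hsub' : [p₁, p₂, p₃, x, y].Sublist [p₁, p₂, p₃, q₁, q₂, q₃]) :=
    (hS.mono hsub).openSegment_inter_triangleOpenEdges_parity (hd.sublist hsub')
  obtain ⟨hf₁, he₁⟩ := parity q₁ q₂ (by simp [insert_subset_iff]) (by simp)
  obtain ⟨hf₂, he₂⟩ := parity q₂ q₃ (by simp [insert_subset_iff]) (by simp)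
  obtain ⟨hf₃, he₃⟩ := parity q₁ q₃ (by simp [insert_subset_iff]) (by simp)
  rw [openSegment_symm] at hf₃ he₃
  obtain ⟨hfin, hcard⟩ := finite_and_ncard_triangleOpenEdges_inter hq hf₁ hf₂ hf₃
  change (triangleOpenEdges p₁ p₂ p₃ ∩ triangleOpenEdges q₁ q₂ q₃).Finite ∧
    Even (triangleOpenEdges p₁ p₂ p₃ ∩ triangleOpenEdges q₁ q₂ q₃).ncard
  rw [inter_comm, hcard, Nat.even_add, Nat.even_add, he₁, he₂, he₃]
  exact ⟨hfin, by grind⟩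
end

section
/- Let ρ be an IC-planar straight-line drawing of a finite simple graph G, and let C₁ and C₂ be two 3-cycles of G with no vertex in common. Then no edge of C₁ crosses an edge of C₂ in ρ. -/
/-!
Suppose `ab` crosses `de` at `p`. The IC conditions make `p` the only point that the closed
polygon `def` shares with the boundary of the triangle `abc`, and `abc` is non-degenerate since no
vertex lies on an edge. Just beyond `p` towards one endpoint, say `d`, the segment `de` lies in the
closed triangle (if it ran along `ab`, it would meet the boundary a second time), while `e` lies
strictly outside it. The path from that point through `d`, `f` and `e` is connected and joins the
triangle to its exterior, so it meets the boundary somewhere other than `p`.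
-/

open Set Filter Topology

theorem IsPreconnected.inter_frontier_nonempty {X : Type*} [TopologicalSpace X] {s t : Set X}
    (hs : IsPreconnected s) (hst : (s ∩ t).Nonempty) (hsnt : (s \ t).Nonempty) :
    (s ∩ frontier t).Nonempty := by
  by_contra! h
  have hcover : s ⊆ interior t ∪ (closure t)ᶜ := fun x hx => by
    by_contra hx'
    simp only [mem_union, mem_compl_iff, not_or, not_not] at hx'
    exact h.subset ⟨hx, hx'.2, hx'.1⟩
  have hdisj : Disjoint (interior t) (closure t)ᶜ :=
    disjoint_compl_right.mono_right (compl_subset_compl.2 interior_subset_closure)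
  obtain ⟨x, hxs, hxt⟩ := hst
  have hxi : x ∈ interior t := (hcover hxs).resolve_right (not_not.2 (subset_closure hxt))
  obtain ⟨y, hys, hyt⟩ := hsnt
  exact hyt (interior_subset (hs.subset_left_of_subset_union isOpen_interior
    isClosed_closure.isOpen_compl hdisj hcover ⟨x, hxs, hxi⟩ hys))

section Plane

variable {P : Type*} [NormedAddCommGroup P] [NormedSpace ℝ P]

theorem exists_mem_openSegment_of_mem_nhds {x : P} {U : Set P} (hU : U ∈ 𝓝 x) (y : P) :
    ∃ z ∈ openSegment ℝ x y, z ∈ U := by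
  have hlim : Tendsto (AffineMap.lineMap x y) (𝓝[>] (0 : ℝ)) (𝓝 x) := by
    simpa using (AffineMap.lineMap_continuous (p := x) (q := y)).tendsto' 0 x (by simp)
      |>.mono_left nhdsWithin_le_nhds
  obtain ⟨t, htU, ht⟩ := ((hlim.eventually hU).and (Ioo_mem_nhdsGT one_pos)).exists
  exact ⟨_, openSegment_eq_image_lineMap ℝ x y ▸ mem_image_of_mem _ ht, htU⟩

theorem isPreconnected_segment_union_segment_union_segment (w x y z : P) :
    IsPreconnected (segment ℝ w x ∪ segment ℝ x y ∪ segment ℝ y z) :=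
  ((convex_segment w x).isPreconnected.union x (right_mem_segment _ _ _)
    (left_mem_segment _ _ _) (convex_segment x y).isPreconnected).union y
    (Or.inr (right_mem_segment _ _ _)) (left_mem_segment _ _ _) (convex_segment y z).isPreconnected

namespace AffineMap

variable (f : P →ᵃ[ℝ] ℝ) {x y z : P}

theorem exists_apply_eq_of_mem_openSegment (hz : z ∈ openSegment ℝ x y) :
    ∃ a b : ℝ, 0 < a ∧ 0 < b ∧ a + b = 1 ∧ f z = a * f x + b * f y := by
  obtain ⟨a, b, ha, hb, hab, rfl⟩ := hz
  exact ⟨a, b, ha, hb, hab, Convex.combo_affine_apply hab⟩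

theorem pos_iff_neg_of_mem_openSegment (hz : z ∈ openSegment ℝ x y) (hfz : f z = 0) :
    0 < f x ↔ f y < 0 := by
  obtain ⟨a, b, ha, hb, -, h⟩ := f.exists_apply_eq_of_mem_openSegment hz
  constructor <;> intro <;> nlinarith

end AffineMap

def triangleBoundary (A B C : P) : Set P := segment ℝ A B ∪ segment ℝ B C ∪ segment ℝ C A

namespace AffineBasis

variable (b : AffineBasis (Fin 3) ℝ P)

theorem coord_of_mem_openSegment {x : P} (hx : x ∈ openSegment ℝ (b 0) (b 1)) :
    0 < b.coord 0 x ∧ 0 < b.coord 1 x ∧ b.coord 2 x = 0 := by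
  obtain ⟨s, t, hs, ht, hst, rfl⟩ := hx
  simp [Convex.combo_affine_apply hst, b.coord_apply_eq, b.coord_apply_ne, hs, ht]

theorem mem_triangleBoundary_of_coord_eq_zero {x : P} (hx : ∀ i, 0 ≤ b.coord i x) {i : Fin 3}
    (hi : b.coord i x = 0) : x ∈ triangleBoundary (b 0) (b 1) (b 2) := by
  have hsum := b.sum_coord_apply_eq_one x
  have hrep := b.linear_combination_coord_eq_self x
  simp only [Fin.sum_univ_three] at hsum hrep
  fin_cases i <;> simp only [Fin.zero_eta, Fin.mk_one, Fin.reduceFinMk] at hi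
  · refine Or.inl (Or.inr ⟨b.coord 1 x, b.coord 2 x, hx 1, hx 2, by linarith, ?_⟩)
    rwa [hi, zero_smul, zero_add] at hrep
  · refine Or.inr ⟨b.coord 2 x, b.coord 0 x, hx 2, hx 0, by linarith, ?_⟩
    rwa [hi, zero_smul, add_zero, add_comm] at hrep
  · refine Or.inl (Or.inl ⟨b.coord 0 x, b.coord 1 x, hx 0, hx 1, by linarith, ?_⟩)
    rwa [hi, zero_smul, add_zero] at hrep

theorem frontier_convexHull_subset_triangleBoundary :
    frontier (convexHull ℝ (range b)) ⊆ triangleBoundary (b 0) (b 1) (b 2) := by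
  rw [(finite_range b).isClosed_convexHull (𝕜 := ℝ) |>.frontier_eq, b.interior_convexHull,
    b.convexHull_eq_nonneg_coord]
  rintro x ⟨hx, hxi⟩
  simp only [mem_ofPred_eq, not_forall, not_lt] at hx hxi
  obtain ⟨i, hi⟩ := hxi
  exact b.mem_triangleBoundary_of_coord_eq_zero hx (le_antisymm hi (hx i))

theorem inter_triangleBoundary_nonempty {s : Set P} (hs : IsPreconnected s)
    (hin : (s ∩ convexHull ℝ (range b)).Nonempty)
    (hout : (s \ convexHull ℝ (range b)).Nonempty) :
    (s ∩ triangleBoundary (b 0) (b 1) (b 2)).Nonempty :=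
  (hs.inter_frontier_nonempty hin hout).mono
    (inter_subset_inter_right _ b.frontier_convexHull_subset_triangleBoundary)

theorem exists_mem_openSegment_coord_pos {p : P} (hp : p ∈ openSegment ℝ (b 0) (b 1)) (y : P) :
    ∃ q ∈ openSegment ℝ p y, 0 < b.coord 0 q ∧ 0 < b.coord 1 q ∧
      ∃ t > 0, b.coord 2 q = t * b.coord 2 y := by
  have : FiniteDimensional ℝ P := b.finiteDimensional
  obtain ⟨hp0, hp1, hp2⟩ := b.coord_of_mem_openSegment hp
  have hU : {x | 0 < b.coord 0 x ∧ 0 < b.coord 1 x} ∈ 𝓝 p :=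
    ((isOpen_lt continuous_const (continuous_barycentric_coord b 0)).inter
      (isOpen_lt continuous_const (continuous_barycentric_coord b 1))).mem_nhds ⟨hp0, hp1⟩
  obtain ⟨q, hq, hq0, hq1⟩ := exists_mem_openSegment_of_mem_nhds hU y
  obtain ⟨_, t, -, ht, -, hq2⟩ := (b.coord 2).exists_apply_eq_of_mem_openSegment hq
  rw [hp2, mul_zero, zero_add] at hq2
  exact ⟨q, hq, hq0, hq1, t, ht, hq2⟩

theorem segment_inter_triangleBoundary_not_subset_singleton_of_nonneg {D E F p : P}
    (hpAB : p ∈ openSegment ℝ (b 0) (b 1)) (hpDE : p ∈ openSegment ℝ D E)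
    (hEF : Disjoint (segment ℝ E F) (triangleBoundary (b 0) (b 1) (b 2)))
    (hFD : Disjoint (segment ℝ F D) (triangleBoundary (b 0) (b 1) (b 2)))
    (hD : 0 ≤ b.coord 2 D) :
    ¬ segment ℝ D E ∩ triangleBoundary (b 0) (b 1) (b 2) ⊆ {p} := by
  intro hDE
  have hp2 := (b.coord_of_mem_openSegment hpAB).2.2
  obtain ⟨q, hq, hq0, hq1, t, ht, hq2⟩ := b.exists_mem_openSegment_coord_pos hpAB D
  have hqDE : segment ℝ q D ⊆ segment ℝ D E :=
    (convex_segment D E).segment_subset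
      ((convex_segment D E).openSegment_subset (openSegment_subset_segment _ _ _ hpDE)
        (left_mem_segment _ _ _) hq) (left_mem_segment _ _ _)
  rcases hD.eq_or_lt with hD0 | hDpos
  · -- `DE` runs along the line through `b 0` and `b 1`, so `q` is a second common point
    have hq2' : b.coord 2 q = 0 := by rw [hq2, ← hD0, mul_zero]
    have hq_bd := b.mem_triangleBoundary_of_coord_eq_zero
      (fun i => by fin_cases i; exacts [hq0.le, hq1.le, hq2'.ge]) hq2'
    have hpD : p = D :=
      left_mem_openSegment_iff.1 (hDE ⟨hqDE (left_mem_segment _ _ _), hq_bd⟩ ▸ hq)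
    exact hFD.notMem_of_mem_left (right_mem_segment _ _ _)
      (hpD ▸ Or.inl (Or.inl (openSegment_subset_segment _ _ _ hpAB)))
  · have hE : b.coord 2 E < 0 := ((b.coord 2).pos_iff_neg_of_mem_openSegment hpDE hp2).1 hDpos
    have hq2pos : 0 < b.coord 2 q := hq2 ▸ mul_pos ht hDpos
    obtain ⟨x, hx, hx_bd⟩ := b.inter_triangleBoundary_nonempty
      (isPreconnected_segment_union_segment_union_segment q D F E)
      ⟨q, Or.inl (Or.inl (left_mem_segment _ _ _)), by
        rw [b.convexHull_eq_nonneg_coord]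
        intro i; fin_cases i
        exacts [hq0.le, hq1.le, hq2pos.le]⟩
      ⟨E, Or.inr (right_mem_segment _ _ _), by
        rw [b.convexHull_eq_nonneg_coord]; exact fun h => (h 2).not_gt hE⟩
    rcases hx with (hxqD | hxDF) | hxFE
    · have hx2 : 0 < b.coord 2 x :=
        (convex_Ioi 0).affine_preimage (b.coord 2) |>.segment_subset hq2pos hDpos hxqD
      exact hx2.ne' (by rw [hDE ⟨hqDE hxqD, hx_bd⟩, hp2])
    · exact hFD.notMem_of_mem_left (segment_symm ℝ D F ▸ hxDF) hx_bd
    · exact hEF.notMem_of_mem_left (segment_symm ℝ F E ▸ hxFE) hx_bd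

end AffineBasis

theorem segment_inter_triangleBoundary_not_subset_singleton (hP : Module.finrank ℝ P = 2)
    {A B C D E F p : P} (hABC : AffineIndependent ℝ ![A, B, C])
    (hpAB : p ∈ openSegment ℝ A B) (hpDE : p ∈ openSegment ℝ D E)
    (hEF : Disjoint (segment ℝ E F) (triangleBoundary A B C))
    (hFD : Disjoint (segment ℝ F D) (triangleBoundary A B C)) :
    ¬ segment ℝ D E ∩ triangleBoundary A B C ⊆ {p} := by
  have : FiniteDimensional ℝ P := Module.finite_of_finrank_eq_succ hP
  let b : AffineBasis (Fin 3) ℝ P := ⟨![A, B, C], hABC,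
    hABC.affineSpan_eq_top_iff_card_eq_finrank_add_one.2 (by simp [hP])⟩
  change p ∈ openSegment ℝ (b 0) (b 1) at hpAB
  change Disjoint _ (triangleBoundary (b 0) (b 1) (b 2)) at hEF hFD
  change ¬ _ ∩ triangleBoundary (b 0) (b 1) (b 2) ⊆ _
  have hp2 := (b.coord_of_mem_openSegment hpAB).2.2
  rcases le_total 0 (b.coord 2 D) with hD | hD
  · exact b.segment_inter_triangleBoundary_not_subset_singleton_of_nonneg hpAB hpDE hEF hFD hD
  · have hE : 0 ≤ b.coord 2 E :=
      not_lt.1 fun h => hD.not_gt (((b.coord 2).pos_iff_neg_of_mem_openSegment hpDE hp2).2 h)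
    rw [openSegment_symm] at hpDE
    rw [segment_symm] at hEF hFD ⊢
    exact b.segment_inter_triangleBoundary_not_subset_singleton_of_nonneg hpAB hpDE hFD hEF hE

end Plane

theorem Sym2.notMem_of_mem_of_notMem {V : Type*} {S : Set V} {u v x y : V} (hu : u ∈ S)
    (hv : v ∈ S) (hx : x ∉ S) (hy : y ∉ S) : ∀ w ∈ s(u, v), w ∉ s(x, y) := by
  simp only [Sym2.mem_iff]
  rintro w (rfl | rfl) (rfl | rfl) <;> contradiction

theorem Set.insert_insert_singleton_rotate {α : Type*} (a b c : α) :
    ({b, c, a} : Set α) = {a, b, c} := by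
  rw [Set.pair_comm, Set.insert_comm]

namespace IsStraightLineDrawing

variable {V : Type*} {G : SimpleGraph V} {ρ : V → ℝ × ℝ} (hρ : IsStraightLineDrawing G ρ)
include hρ

theorem vertex_notMem_segment {u v w : V} (huv : G.Adj u v) (hw : w ∉ s(u, v)) :
    ρ w ∉ segment ℝ (ρ u) (ρ v) := by
  rw [← insert_endpoints_openSegment]
  rintro (h | h | h)
  · exact hw (hρ.inj h ▸ Sym2.mem_mk_left u v)
  · exact hw (hρ.inj h ▸ Sym2.mem_mk_right u v)
  · exact hρ.no_vertex_on_edge _ huv w hw h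

theorem affineIndependent {a b c : V} (hab : G.Adj a b) (hbc : G.Adj b c) (hca : G.Adj c a) :
    AffineIndependent ℝ ![ρ a, ρ b, ρ c] := by
  rw [affineIndependent_iff_not_collinear_set]
  intro h
  rcases h.wbtw_or_wbtw_or_wbtw with h | h | h <;> rw [← mem_segment_iff_wbtw] at h
  · exact hρ.vertex_notMem_segment hca.symm (by simp [hab.ne', hbc.ne]) h
  · exact hρ.vertex_notMem_segment hab.symm (by simp [hbc.ne', hca.ne]) h
  · exact hρ.vertex_notMem_segment hbc.symm (by simp [hca.ne', hab.ne]) h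

section Edges

variable {u v x y : V} (huv : G.Adj u v) (hxy : G.Adj x y)
include huv hxy

theorem segment_inter_segment_subset (hne : ∀ w ∈ s(u, v), w ∉ s(x, y)) :
    segment ℝ (ρ u) (ρ v) ∩ segment ℝ (ρ x) (ρ y) ⊆
      edgeSeg ρ s(u, v) ∩ edgeSeg ρ s(x, y) := by
  rintro z ⟨hzuv, hzxy⟩
  have hu := hρ.vertex_notMem_segment hxy (hne u (Sym2.mem_mk_left u v))
  have hv := hρ.vertex_notMem_segment hxy (hne v (Sym2.mem_mk_right u v))
  have hx := hρ.vertex_notMem_segment huv fun h => hne x h (Sym2.mem_mk_left x y)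
  have hy := hρ.vertex_notMem_segment huv fun h => hne y h (Sym2.mem_mk_right x y)
  exact ⟨mem_openSegment_of_ne_left_right (by rintro rfl; exact hu hzxy)
      (by rintro rfl; exact hv hzxy) hzuv,
    mem_openSegment_of_ne_left_right (by rintro rfl; exact hx hzuv)
      (by rintro rfl; exact hy hzuv) hzxy⟩

theorem disjoint_segment_of_not_crosses (hne : ∀ w ∈ s(u, v), w ∉ s(x, y))
    (h : ¬ Crosses ρ s(u, v) s(x, y)) :
    Disjoint (segment ℝ (ρ u) (ρ v)) (segment ℝ (ρ x) (ρ y)) :=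
  Set.disjoint_iff.2 fun _ hz => h ⟨hne, _, hρ.segment_inter_segment_subset huv hxy hne hz⟩

theorem segment_inter_segment_subset_singleton (H : Crosses ρ s(u, v) s(x, y)) {p : ℝ × ℝ}
    (hp : p ∈ edgeSeg ρ s(u, v) ∩ edgeSeg ρ s(x, y)) :
    segment ℝ (ρ u) (ρ v) ∩ segment ℝ (ρ x) (ρ y) ⊆ {p} := fun _ hz =>
  hρ.meet_at_most_once _ huv _ hxy H.1 (hρ.segment_inter_segment_subset huv hxy H.1 hz) hp

end Edges

section Triangle

variable {a b c x y : V} (hab : G.Adj a b) (hbc : G.Adj b c) (hca : G.Adj c a)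
  (hxy : G.Adj x y) (hx : x ∉ ({a, b, c} : Set V)) (hy : y ∉ ({a, b, c} : Set V))
include hab hbc hca hxy hx hy

theorem disjoint_segment_triangleBoundary (hab' : ¬ Crosses ρ s(a, b) s(x, y))
    (hbc' : ¬ Crosses ρ s(b, c) s(x, y)) (hca' : ¬ Crosses ρ s(c, a) s(x, y)) :
    Disjoint (segment ℝ (ρ x) (ρ y)) (triangleBoundary (ρ a) (ρ b) (ρ c)) := by
  simp only [triangleBoundary, Set.disjoint_union_right]
  refine ⟨⟨(hρ.disjoint_segment_of_not_crosses hab hxy ?_ hab').symm,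
    (hρ.disjoint_segment_of_not_crosses hbc hxy ?_ hbc').symm⟩,
    (hρ.disjoint_segment_of_not_crosses hca hxy ?_ hca').symm⟩ <;>
  exact Sym2.notMem_of_mem_of_notMem (by simp) (by simp) hx hy

theorem segment_inter_triangleBoundary_subset_singleton (H : Crosses ρ s(a, b) s(x, y))
    {p : ℝ × ℝ} (hp : p ∈ edgeSeg ρ s(a, b) ∩ edgeSeg ρ s(x, y))
    (hbc' : ¬ Crosses ρ s(b, c) s(x, y)) (hca' : ¬ Crosses ρ s(c, a) s(x, y)) :
    segment ℝ (ρ x) (ρ y) ∩ triangleBoundary (ρ a) (ρ b) (ρ c) ⊆ {p} := by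
  rintro z ⟨hz, (hzab | hzbc) | hzca⟩
  · exact hρ.segment_inter_segment_subset_singleton hab hxy H hp ⟨hzab, hz⟩
  · exact (hρ.disjoint_segment_of_not_crosses hbc hxy
      (Sym2.notMem_of_mem_of_notMem (by simp) (by simp) hx hy) hbc').notMem_of_mem_left
      hzbc hz |>.elim
  · exact (hρ.disjoint_segment_of_not_crosses hca hxy
      (Sym2.notMem_of_mem_of_notMem (by simp) (by simp) hx hy) hca').notMem_of_mem_left
      hzca hz |>.elim

end Triangle

end IsStraightLineDrawing

namespace IsICPlanarDrawing

variable {V : Type*} {G : SimpleGraph V} {ρ : V → ℝ × ℝ} (hρ : IsICPlanarDrawing G ρ)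
include hρ

theorem not_crosses_of_crosses {e f g : Sym2 V} (he : e ∈ G.edgeSet) (hf : f ∈ G.edgeSet)
    (hg : g ∈ G.edgeSet) (hef : Crosses ρ e f) (hgf : g ≠ f) : ¬ Crosses ρ e g :=
  fun heg => hgf (hρ.2.1 e he g hg f hf heg hef)

theorem not_crosses_of_crosses_of_mem_of_mem {e e' f g : Sym2 V} (he : e ∈ G.edgeSet)
    (he' : e' ∈ G.edgeSet) (hf : f ∈ G.edgeSet) (hg : g ∈ G.edgeSet) (hef : Crosses ρ e f)
    (hne : e ≠ e') {v : V} (hv : v ∈ e) (hv' : v ∈ e') : ¬ Crosses ρ e' g :=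
  fun he'g => hρ.2.2 e he e' he' ⟨f, hf, hef⟩ ⟨g, hg, he'g⟩ hne v hv hv'

theorem not_crosses_of_disjoint {a b c d e f : V} (hab : G.Adj a b) (hbc : G.Adj b c)
    (hca : G.Adj c a) (hde : G.Adj d e) (hef : G.Adj e f) (hfd : G.Adj f d)
    (hdisj : Disjoint ({a, b, c} : Set V) {d, e, f}) : ¬ Crosses ρ s(a, b) s(d, e) := by
  intro H
  obtain ⟨p, hp⟩ := H.2
  have hBC : ∀ g ∈ G.edgeSet, ¬ Crosses ρ s(b, c) g := fun g hg =>
    hρ.not_crosses_of_crosses_of_mem_of_mem hab hbc hde hg H (by simp [hab.ne, hca.ne'])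
      (Sym2.mem_mk_right a b) (Sym2.mem_mk_left b c)
  have hCA : ∀ g ∈ G.edgeSet, ¬ Crosses ρ s(c, a) g := fun g hg =>
    hρ.not_crosses_of_crosses_of_mem_of_mem hab hca hde hg H (by simp [hab.ne', hbc.ne])
      (Sym2.mem_mk_left a b) (Sym2.mem_mk_right c a)
  have hnot : ∀ v ∈ ({d, e, f} : Set V), v ∉ ({a, b, c} : Set V) := fun v hv hv' =>
    hdisj.notMem_of_mem_left hv' hv
  refine segment_inter_triangleBoundary_not_subset_singleton (F := ρ f) (by simp)
    (hρ.1.affineIndependent hab hbc hca) hp.1 hp.2 ?_ ?_ ?_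
  · exact hρ.1.disjoint_segment_triangleBoundary hab hbc hca hef (hnot e (by simp))
      (hnot f (by simp)) (hρ.not_crosses_of_crosses hab hde hef H (by simp [hde.ne', hfd.ne]))
      (hBC _ hef) (hCA _ hef)
  · exact hρ.1.disjoint_segment_triangleBoundary hab hbc hca hfd (hnot f (by simp))
      (hnot d (by simp)) (hρ.not_crosses_of_crosses hab hde hfd H (by simp [hfd.ne, hef.ne']))
      (hBC _ hfd) (hCA _ hfd)
  · exact hρ.1.segment_inter_triangleBoundary_subset_singleton hab hbc hca hde
      (hnot d (by simp)) (hnot e (by simp)) H hp (hBC _ hde) (hCA _ hde)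

theorem not_crosses_of_disjoint_of_mem {a b c d e f : V} (hab : G.Adj a b) (hbc : G.Adj b c)
    (hca : G.Adj c a) (hde : G.Adj d e) (hef : G.Adj e f) (hfd : G.Adj f d)
    (hdisj : Disjoint ({a, b, c} : Set V) {d, e, f}) :
    ∀ g ∈ ({s(d, e), s(e, f), s(f, d)} : Set (Sym2 V)), ¬ Crosses ρ s(a, b) g := by
  rintro _ (rfl | rfl | rfl)
  · exact hρ.not_crosses_of_disjoint hab hbc hca hde hef hfd hdisj
  · refine hρ.not_crosses_of_disjoint hab hbc hca hef hfd hde ?_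
    rwa [Set.insert_insert_singleton_rotate d]
  · refine hρ.not_crosses_of_disjoint hab hbc hca hfd hde hef ?_
    rwa [Set.insert_insert_singleton_rotate e, Set.insert_insert_singleton_rotate d]

end IsICPlanarDrawing

theorem disjoint_triangles_do_not_cross_general {V : Type*} (G : SimpleGraph V)
    (ρ : V → ℝ × ℝ) (hρ : IsICPlanarDrawing G ρ) (a b c d e f : V)
    (hab : G.Adj a b) (hbc : G.Adj b c) (hca : G.Adj c a)
    (hde : G.Adj d e) (hef : G.Adj e f) (hfd : G.Adj f d)
    (hdisj : ({a, b, c} : Set V) ∩ ({d, e, f} : Set V) = ∅) :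
    ∀ e₁ ∈ ({s(a, b), s(b, c), s(c, a)} : Set (Sym2 V)),
      ∀ e₂ ∈ ({s(d, e), s(e, f), s(f, d)} : Set (Sym2 V)),
        ¬ Crosses ρ e₁ e₂ := by
  have hdisj := Set.disjoint_iff_inter_eq_empty.2 hdisj
  rintro _ (rfl | rfl | rfl)
  · exact hρ.not_crosses_of_disjoint_of_mem hab hbc hca hde hef hfd hdisj
  · refine hρ.not_crosses_of_disjoint_of_mem hbc hca hab hde hef hfd ?_
    rwa [Set.insert_insert_singleton_rotate a]
  · refine hρ.not_crosses_of_disjoint_of_mem hca hab hbc hde hef hfd ?_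
    rwa [Set.insert_insert_singleton_rotate b, Set.insert_insert_singleton_rotate a]

/-- In an IC-planar straight-line drawing, no edge of a 3-cycle
crosses an edge of a vertex-disjoint 3-cycle. -/
theorem disjoint_triangles_do_not_cross {V : Type*} [Fintype V] (G : SimpleGraph V)
    (ρ : V → ℝ × ℝ) (hρ : IsICPlanarDrawing G ρ) (a b c d e f : V)
    (hab : G.Adj a b) (hbc : G.Adj b c) (hca : G.Adj c a)
    (hde : G.Adj d e) (hef : G.Adj e f) (hfd : G.Adj f d)
    (hdisj : ({a, b, c} : Set V) ∩ ({d, e, f} : Set V) = ∅) :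
    ∀ e₁ ∈ ({s(a, b), s(b, c), s(c, a)} : Set (Sym2 V)),
      ∀ e₂ ∈ ({s(d, e), s(e, f), s(f, d)} : Set (Sym2 V)),
        ¬ Crosses ρ e₁ e₂ :=
  disjoint_triangles_do_not_cross_general G ρ hρ a b c d e f hab hbc hca hde hef hfd hdisj
end
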